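/- (Rabi-frequency-conditioned dark state for two ground and two excited states.) Let Ng = Ne = 2 and let H be the Hermitian matrix whose ground 2×2 block is zero, whose excited 2×2 block is diagonal with real entries 𝓔₃, 𝓔₄, and whose coupling block has entries H (inl i) (inr j) = V i j ∈ ℂ (so H (inr j) (inl i) = conj(V i j)). Then a dark state exists — i.e. there is a density matrix ρ with L(ρ) = 0 and ρ = PρP — if and only if V 1 1 · V 2 2 = V 1 2 · V 2 1. -/

import Mathlib

open Matrix Complex BigOperators ComplexOrder

/-- Projection onto the ground-state indices. -/
noncomputable def Pg (Ng Ne : ℕ) : Matrix (Fin Ng ⊕ Fin Ne) (Fin Ng ⊕ Fin Ne) ℂ :=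
  Matrix.diagonal (Sum.elim (fun _ => 1) (fun _ => 0))

/-- Projection onto the excited-state indices. -/
noncomputable def Qe (Ng Ne : ℕ) : Matrix (Fin Ng ⊕ Fin Ne) (Fin Ng ⊕ Fin Ne) ℂ :=
  1 - Pg Ng Ne

/-- Jump operator |g_i⟩⟨e_j|. -/
noncomputable def jump (Ng Ne : ℕ) (i : Fin Ng) (j : Fin Ne) :
    Matrix (Fin Ng ⊕ Fin Ne) (Fin Ng ⊕ Fin Ne) ℂ :=
  Matrix.single (Sum.inl i) (Sum.inr j) 1

/-- Decay operator Γ = Σ γ_{ij} σ_{ij}ᴴ σ_{ij}. -/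
noncomputable def Gam (Ng Ne : ℕ) (γ : Fin Ng → Fin Ne → ℝ) :
    Matrix (Fin Ng ⊕ Fin Ne) (Fin Ng ⊕ Fin Ne) ℂ :=
  ∑ i, ∑ j, (γ i j : ℂ) • ((jump Ng Ne i j)ᴴ * jump Ng Ne i j)

/-- The Lindblad generator. -/
noncomputable def Lindblad (Ng Ne : ℕ) (H : Matrix (Fin Ng ⊕ Fin Ne) (Fin Ng ⊕ Fin Ne) ℂ)
    (γ : Fin Ng → Fin Ne → ℝ) (ρ : Matrix (Fin Ng ⊕ Fin Ne) (Fin Ng ⊕ Fin Ne) ℂ) :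
    Matrix (Fin Ng ⊕ Fin Ne) (Fin Ng ⊕ Fin Ne) ℂ :=
  (-Complex.I) • (H * ρ - ρ * H) +
    ∑ i, ∑ j, (γ i j : ℂ) •
      (jump Ng Ne i j * ρ * (jump Ng Ne i j)ᴴ -
        (1 / 2 : ℂ) • ((jump Ng Ne i j)ᴴ * jump Ng Ne i j * ρ +
          ρ * ((jump Ng Ne i j)ᴴ * jump Ng Ne i j)))

/-- A dark state: a density matrix annihilated by the Lindbladian and supported on the
ground-state subspace. -/
def IsDarkState (Ng Ne : ℕ) (H : Matrix (Fin Ng ⊕ Fin Ne) (Fin Ng ⊕ Fin Ne) ℂ)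
    (γ : Fin Ng → Fin Ne → ℝ) (ρ : Matrix (Fin Ng ⊕ Fin Ne) (Fin Ng ⊕ Fin Ne) ℂ) : Prop :=
  ρ.PosSemidef ∧ ρ.trace = 1 ∧ Lindblad Ng Ne H γ ρ = 0 ∧ ρ = Pg Ng Ne * ρ * Pg Ng Ne

/-! On a state supported on the ground space every jump operator `|g_i⟩⟨e_j|` annihilates `ρ`
from both sides, so the dissipator vanishes and `L ρ = 0` reduces to `[H, ρ] = 0`. Writing
`ρ = diag(A, 0)` and `H = ((0, V), (Vᴴ, E))`, the commutator vanishes iff `A V = 0`. A density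
matrix `A` with `A V = 0` exists iff `V` has a nonzero left null vector `v`, i.e. `det V = 0`:
take `A` to be the normalised projection onto `star v`. -/

namespace Matrix

variable {n m R : Type*} [Fintype n] [Fintype m]

theorem PosSemidef.fromBlocks_zero [CommRing R] [PartialOrder R] [StarRing R]
    [StarOrderedRing R] {A : Matrix n n R} (hA : A.PosSemidef) :
    (fromBlocks A 0 0 0 : Matrix (n ⊕ m) (n ⊕ m) R).PosSemidef := by
  classical
  have h := hA.mul_mul_conjTranspose_same (fromRows (1 : Matrix n n R) (0 : Matrix m n R))
  rw [conjTranspose_fromRows_eq_fromCols_conjTranspose, fromRows_mul, fromRows_mul_fromCols,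
    conjTranspose_one, conjTranspose_zero] at h
  simpa using h

theorem trace_fromBlocks [AddCommMonoid R] (A : Matrix n n R) (B : Matrix n m R)
    (C : Matrix m n R) (D : Matrix m m R) : (fromBlocks A B C D).trace = A.trace + D.trace := by
  simp [trace, Fintype.sum_sum_type]

theorem commute_fromBlocks_iff_mul_eq_zero [Semiring R] [StarRing R] {A : Matrix n n R}
    (hA : A.IsHermitian) (B : Matrix n m R) (D : Matrix m m R) :
    Commute (fromBlocks 0 B Bᴴ D) (fromBlocks A 0 0 0) ↔ A * B = 0 := by
  simp only [Commute, SemiconjBy, fromBlocks_multiply, Matrix.zero_mul, Matrix.mul_zero,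
    add_zero, fromBlocks_inj, true_and, and_true]
  rw [← hA.eq, ← conjTranspose_mul, conjTranspose_eq_zero, hA.eq, eq_comm, and_self]

theorem exists_posSemidef_trace_eq_one_mul_eq_zero_iff_det_eq_zero {𝕜 : Type*} [RCLike 𝕜]
    [DecidableEq n] (V : Matrix n n 𝕜) :
    (∃ A : Matrix n n 𝕜, A.PosSemidef ∧ A.trace = 1 ∧ A * V = 0) ↔ V.det = 0 := by
  constructor
  · rintro ⟨A, -, htr, hAV⟩
    by_contra hdet
    have hA : A = 0 := by
      rw [← mul_nonsing_inv_cancel_right V A (isUnit_iff_ne_zero.mpr hdet), hAV, Matrix.zero_mul]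
    simp [hA] at htr
  · intro hdet
    obtain ⟨v, hv, hvV⟩ := exists_vecMul_eq_zero_iff.mpr hdet
    have hpos : 0 < star v ⬝ᵥ v := dotProduct_star_self_pos_iff.mpr hv
    refine ⟨(star v ⬝ᵥ v)⁻¹ • vecMulVec (star v) v,
      (posSemidef_vecMulVec_star_self v).smul (inv_nonneg.mpr hpos.le), ?_, ?_⟩
    · rw [trace_smul, trace_vecMulVec, smul_eq_mul, inv_mul_cancel₀ hpos.ne']
    · rw [Matrix.smul_mul, vecMulVec_mul, hvV, vecMulVec_zero, smul_zero]

end Matrix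

section DarkState

variable {Ng Ne : ℕ}

theorem Pg_eq_fromBlocks : Pg Ng Ne = fromBlocks 1 0 0 0 := by
  ext (i | j) (i' | j') <;> simp [Pg, one_apply, diagonal_apply]

theorem isHermitian_Pg : (Pg Ng Ne).IsHermitian := by
  simp [Pg, IsHermitian, diagonal_conjTranspose]

theorem Pg_mul_mul_Pg (ρ : Matrix (Fin Ng ⊕ Fin Ne) (Fin Ng ⊕ Fin Ne) ℂ) :
    Pg Ng Ne * ρ * Pg Ng Ne = fromBlocks ρ.toBlocks₁₁ 0 0 0 := by
  conv_lhs => rw [Pg_eq_fromBlocks, ← fromBlocks_toBlocks ρ]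
  simp [fromBlocks_multiply]

theorem jump_mul_Pg (i : Fin Ng) (j : Fin Ne) : jump Ng Ne i j * Pg Ng Ne = 0 := by
  ext a (i' | j') <;> simp [jump, Pg, mul_diagonal]

theorem Pg_mul_conjTranspose_jump (i : Fin Ng) (j : Fin Ne) :
    Pg Ng Ne * (jump Ng Ne i j)ᴴ = 0 := by
  rw [← isHermitian_Pg.eq, ← conjTranspose_mul, jump_mul_Pg, conjTranspose_zero]

theorem Lindblad_eq_of_eq_Pg_mul_mul_Pg (H : Matrix (Fin Ng ⊕ Fin Ne) (Fin Ng ⊕ Fin Ne) ℂ)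
    (γ : Fin Ng → Fin Ne → ℝ) {ρ : Matrix (Fin Ng ⊕ Fin Ne) (Fin Ng ⊕ Fin Ne) ℂ}
    (hρ : ρ = Pg Ng Ne * ρ * Pg Ng Ne) :
    Lindblad Ng Ne H γ ρ = (-Complex.I) • (H * ρ - ρ * H) := by
  have hl : ∀ i j, jump Ng Ne i j * ρ = 0 := fun i j => by
    rw [hρ, ← mul_assoc, ← mul_assoc, jump_mul_Pg, zero_mul, zero_mul]
  have hr : ∀ i j, ρ * (jump Ng Ne i j)ᴴ = 0 := fun i j => by
    rw [hρ, mul_assoc, Pg_mul_conjTranspose_jump, mul_zero]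
  have hr' : ∀ i j, ρ * ((jump Ng Ne i j)ᴴ * jump Ng Ne i j) = 0 := fun i j => by
    rw [← mul_assoc, hr, zero_mul]
  simp [Lindblad, hl, hr', mul_assoc]

theorem Lindblad_eq_zero_iff_commute (H : Matrix (Fin Ng ⊕ Fin Ne) (Fin Ng ⊕ Fin Ne) ℂ)
    (γ : Fin Ng → Fin Ne → ℝ) {ρ : Matrix (Fin Ng ⊕ Fin Ne) (Fin Ng ⊕ Fin Ne) ℂ}
    (hρ : ρ = Pg Ng Ne * ρ * Pg Ng Ne) :
    Lindblad Ng Ne H γ ρ = 0 ↔ Commute H ρ := by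
  rw [Lindblad_eq_of_eq_Pg_mul_mul_Pg H γ hρ, smul_eq_zero, sub_eq_zero, commute_iff_eq]
  simp [Complex.I_ne_zero]

theorem exists_isDarkState_iff (H : Matrix (Fin Ng ⊕ Fin Ne) (Fin Ng ⊕ Fin Ne) ℂ)
    (γ : Fin Ng → Fin Ne → ℝ) (h₁₁ : H.toBlocks₁₁ = 0) (h₂₁ : H.toBlocks₂₁ = H.toBlocks₁₂ᴴ) :
    (∃ ρ, IsDarkState Ng Ne H γ ρ) ↔
      ∃ A : Matrix (Fin Ng) (Fin Ng) ℂ, A.PosSemidef ∧ A.trace = 1 ∧ A * H.toBlocks₁₂ = 0 := by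
  have hH : H = fromBlocks 0 H.toBlocks₁₂ H.toBlocks₁₂ᴴ H.toBlocks₂₂ := by
    rw [← h₁₁, ← h₂₁, fromBlocks_toBlocks]
  constructor
  · rintro ⟨ρ, hpsd, htr, hL, hρ⟩
    have hA : ρ.toBlocks₁₁.PosSemidef := hpsd.submatrix Sum.inl
    rw [Lindblad_eq_zero_iff_commute H γ hρ] at hL
    rw [Pg_mul_mul_Pg] at hρ
    refine ⟨ρ.toBlocks₁₁, hA, ?_, ?_⟩
    · rwa [hρ, trace_fromBlocks, trace_zero, add_zero] at htr
    · rw [hH, hρ] at hL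
      exact (commute_fromBlocks_iff_mul_eq_zero hA.1 _ _).mp hL
  · rintro ⟨A, hA, htr, hAV⟩
    have hρ : fromBlocks A 0 0 0 = Pg Ng Ne * fromBlocks A 0 0 0 * Pg Ng Ne := by
      rw [Pg_mul_mul_Pg, toBlocks_fromBlocks₁₁]
    refine ⟨fromBlocks A 0 0 0, hA.fromBlocks_zero, by simpa [trace_fromBlocks], ?_, hρ⟩
    rw [Lindblad_eq_zero_iff_commute H γ hρ, hH]
    exact (commute_fromBlocks_iff_mul_eq_zero hA.1 _ _).mpr hAV

end DarkState

theorem dark_state_iff_rabi_condition_two_by_two_general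
    (H : Matrix (Fin 2 ⊕ Fin 2) (Fin 2 ⊕ Fin 2) ℂ)
    (V : Fin 2 → Fin 2 → ℂ)
    (hgg : ∀ i i' : Fin 2, H (Sum.inl i) (Sum.inl i') = 0)
    (hge : ∀ i j : Fin 2, H (Sum.inl i) (Sum.inr j) = V i j)
    (heg : ∀ i j : Fin 2, H (Sum.inr j) (Sum.inl i) = starRingEnd ℂ (V i j))
    (γ : Fin 2 → Fin 2 → ℝ) :
    (∃ ρ : Matrix (Fin 2 ⊕ Fin 2) (Fin 2 ⊕ Fin 2) ℂ,
        IsDarkState 2 2 H γ ρ) ↔ V 0 0 * V 1 1 = V 0 1 * V 1 0 := by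
  have h₁₁ : H.toBlocks₁₁ = 0 := by ext i i'; exact hgg i i'
  have h₂₁ : H.toBlocks₂₁ = H.toBlocks₁₂ᴴ := by
    ext j i; simp [toBlocks₂₁, toBlocks₁₂, heg, hge]
  rw [exists_isDarkState_iff H γ h₁₁ h₂₁,
    exists_posSemidef_trace_eq_one_mul_eq_zero_iff_det_eq_zero, det_fin_two, sub_eq_zero]
  simp only [toBlocks₁₂, of_apply, hge]

theorem dark_state_iff_rabi_condition_two_by_two
    (H : Matrix (Fin 2 ⊕ Fin 2) (Fin 2 ⊕ Fin 2) ℂ)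
    (V : Fin 2 → Fin 2 → ℂ) (𝓔₃ 𝓔₄ : ℝ)
    (hgg : ∀ i i' : Fin 2, H (Sum.inl i) (Sum.inl i') = 0)
    (hge : ∀ i j : Fin 2, H (Sum.inl i) (Sum.inr j) = V i j)
    (heg : ∀ i j : Fin 2, H (Sum.inr j) (Sum.inl i) = starRingEnd ℂ (V i j))
    (hee : ∀ j j' : Fin 2, j ≠ j' → H (Sum.inr j) (Sum.inr j') = 0)
    (hee0 : H (Sum.inr 0) (Sum.inr 0) = (𝓔₃ : ℂ))
    (hee1 : H (Sum.inr 1) (Sum.inr 1) = (𝓔₄ : ℂ))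
    (γ : Fin 2 → Fin 2 → ℝ) (hγ : ∀ i j, 0 ≤ γ i j)
    (hγpos : ∀ j, 0 < ∑ i, γ i j) :
    (∃ ρ : Matrix (Fin 2 ⊕ Fin 2) (Fin 2 ⊕ Fin 2) ℂ,
        IsDarkState 2 2 H γ ρ) ↔ V 0 0 * V 1 1 = V 0 1 * V 1 0 :=
  dark_state_iff_rabi_condition_two_by_two_general H V hgg hge heg γ
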